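/- arXiv:2110.05659 — 8 statements merged into one kernel-verified Lean document; each statement's English description precedes it below -/
import Mathlib

section
/- For every nonnegative integer N and all complex numbers z, w such that z+i, w+i, and w-z+i are not nonpositive integers for every integer i with 0 ≤ i ≤ N, one has the identity ∑_{i=0}^{N} (-1)^i · binom(N,i) · Γ(z+i)/Γ(w+i) = (Γ(z)/Γ(w-z)) · (Γ(w-z+N)/Γ(w+N)), where Γ denotes the complex Gamma function. -/
/-!
Writing `Γ(z + i) = Γ(z) (z)ᵢ` and `Γ(w + N) = Γ(w + i) (w + i)_{N-i}` with ascending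
Pochhammer symbols, the identity becomes `(w - z)_N = ∑ (-1)ⁱ C(N,i) (z)ᵢ (w + i)_{N-i}`.
This is the Chu–Vandermonde identity `(x + y)^{(N)} = ∑ C(N,i) x^{(i)} y^{(N-i)}` for falling
factorials, taken at `x = -z`, `y = w + N - 1`.
-/

open Finset Polynomial Complex

theorem descPochhammer_eval_neg {R : Type*} [CommRing R] (a : R) (n : ℕ) :
    (descPochhammer R n).eval (-a) = (-1) ^ n * (ascPochhammer R n).eval a := by
  rw [← neg_neg a, ascPochhammer_eval_neg_eq_descPochhammer, neg_neg, ← mul_assoc, ← mul_pow,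
    neg_one_mul, neg_neg, one_pow, one_mul]

theorem descPochhammer_eval_add {R : Type*} [CommRing R] (r s : R) (n : ℕ) :
    (descPochhammer R n).eval (r + s) = ∑ i ∈ range (n + 1),
      n.choose i * ((descPochhammer R i).eval r * (descPochhammer R (n - i)).eval s) := by
  have h := Ring.descPochhammer_smeval_add n (Commute.all r s)
  simp only [descPochhammer_smeval_eq_ascPochhammer, ascPochhammer_smeval_eq_eval,
    ← descPochhammer_eval_eq_ascPochhammer] at h
  rw [h, Nat.sum_antidiagonal_eq_sum_range_succ
    (fun i j => (n.choose i : R) * ((descPochhammer R i).eval r * (descPochhammer R j).eval s))]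

theorem ascPochhammer_eval_sub_eq_sum {R : Type*} [CommRing R] (a b : R) (n : ℕ) :
    (ascPochhammer R n).eval (b - a) = ∑ i ∈ range (n + 1),
      (-1) ^ i * n.choose i * (ascPochhammer R i).eval a *
        (ascPochhammer R (n - i)).eval (b + i) := by
  rw [show b - a = -a + (b + n - 1) - n + 1 by ring, ← descPochhammer_eval_eq_ascPochhammer,
    descPochhammer_eval_add]
  refine sum_congr rfl fun i hi => ?_
  have hi : i ≤ n := Nat.lt_succ_iff.mp (mem_range.mp hi)
  rw [descPochhammer_eval_neg, descPochhammer_eval_eq_ascPochhammer, Nat.cast_sub hi,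
    show b + n - 1 - (n - i) + 1 = b + i by ring]
  ring

namespace Complex

theorem Gamma_add_nat_eq_mul_ascPochhammer {z : ℂ} (hz : ∀ k : ℕ, z ≠ -k) (n : ℕ) :
    Gamma (z + n) = Gamma z * (ascPochhammer ℂ n).eval z := by
  rw [← Gamma_add_nat_div_Gamma_eq z hz, mul_div_cancel₀ _ (Gamma_ne_zero hz)]

theorem Gamma_add_nat_div_Gamma_add_nat_eq {z w : ℂ} {i N : ℕ} (hi : i ≤ N)
    (hz : ∀ k : ℕ, z ≠ -k) (hw : ∀ k : ℕ, w + i ≠ -k) (hwN : ∀ k : ℕ, w + N ≠ -k) :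
    Gamma (z + i) / Gamma (w + i) =
      Gamma z / Gamma (w + N) * ((ascPochhammer ℂ i).eval z *
        (ascPochhammer ℂ (N - i)).eval (w + i)) := by
  have hsplit : Gamma (w + N) = Gamma (w + i) * (ascPochhammer ℂ (N - i)).eval (w + i) := by
    rw [← Gamma_add_nat_eq_mul_ascPochhammer hw, Nat.cast_sub hi, add_add_sub_cancel]
  have hpoch : (ascPochhammer ℂ (N - i)).eval (w + i) ≠ 0 :=
    right_ne_zero_of_mul (hsplit ▸ Gamma_ne_zero hwN)
  rw [hsplit, Gamma_add_nat_eq_mul_ascPochhammer hz]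
  field_simp [Gamma_ne_zero hw]

end Complex

/-- Ikeda's Gamma-function summation identity:
`∑_{i=0}^{N} (-1)^i C(N,i) Γ(z+i)/Γ(w+i) = (Γ(z)/Γ(w-z)) (Γ(w-z+N)/Γ(w+N))`,
valid whenever `z+i`, `w+i`, `w-z+i` are not nonpositive integers for `0 ≤ i ≤ N`. -/
theorem ikeda_gamma_identity (N : ℕ) (z w : ℂ)
    (h : ∀ i : ℕ, i ≤ N →
      (∀ k : ℕ, z + (i : ℂ) ≠ -(k : ℂ)) ∧
      (∀ k : ℕ, w + (i : ℂ) ≠ -(k : ℂ)) ∧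
      (∀ k : ℕ, w - z + (i : ℂ) ≠ -(k : ℂ))) :
    ∑ i ∈ Finset.range (N + 1),
        (-1 : ℂ) ^ i * (N.choose i : ℂ) * Complex.Gamma (z + i) / Complex.Gamma (w + i) =
      Complex.Gamma z / Complex.Gamma (w - z) *
        (Complex.Gamma (w - z + N) / Complex.Gamma (w + N)) := by
  have hz : ∀ k : ℕ, z ≠ -k := by simpa using (h 0 N.zero_le).1
  have hwz : ∀ k : ℕ, w - z ≠ -k := by simpa using (h 0 N.zero_le).2.2
  calc _ = Gamma z / Gamma (w + N) * ∑ i ∈ range (N + 1), (-1 : ℂ) ^ i * N.choose i *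
          (ascPochhammer ℂ i).eval z * (ascPochhammer ℂ (N - i)).eval (w + i) := by
        rw [mul_sum]
        refine sum_congr rfl fun i hi => ?_
        have hi : i ≤ N := Nat.lt_succ_iff.mp (mem_range.mp hi)
        rw [mul_div_assoc, Gamma_add_nat_div_Gamma_add_nat_eq hi hz (h i hi).2.1 (h N le_rfl).2.1]
        ring
    _ = Gamma z / Gamma (w + N) * (ascPochhammer ℂ N).eval (w - z) := by
        rw [ascPochhammer_eval_sub_eq_sum]
    _ = _ := by
        rw [Gamma_add_nat_eq_mul_ascPochhammer hwz]
        field_simp [Gamma_ne_zero hwz]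
end

section
/- For all positive integers r and κ, the finite sum ∑_{l=0}^{⌊r/2⌋} ∏_{j=0}^{l-1} [(r-2j)(r-2j-1)] / [(2j+2)(2κ+2j+1)] equals 2^r · binom(r+κ-1, r) / binom(r+2κ-1, r), where the empty product corresponding to l = 0 has value one. -/
/-!
Write `a` for `κ`. The summand `T_r(l)` is the hypergeometric term `C(r, 2l) (1/2)_l / (a + 1/2)_l`,
so the sum `S_r` may run over `l ≤ r`, the extra terms vanishing. Telescoping in `l` with the
Wilf–Zeilberger certificate `G(l) = 2l (2l + 2a - 1) / ((r + 1)(r + 2a)) · T_{r+1}(l)` gives the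
recurrence `S_{r+1} = 2 (r + a) / (r + 2a) · S_r`, hence `S_r = 2^r (a)_r / (2a)_r` for every
positive `a` in an ordered field; and `(κ)_r = r! · C(r + κ - 1, r)`.
-/

open Finset Polynomial

variable {K : Type*} [Field K]

def monsterTerm (a : K) (r l : ℕ) : K :=
  ∏ j ∈ range l, ((r - 2 * j) * (r - 2 * j - 1)) / ((2 * j + 2) * (2 * a + 2 * j + 1))

theorem monsterTerm_eq_zero_of_lt (a : K) {r l : ℕ} (h : r / 2 < l) : monsterTerm a r l = 0 := by
  refine prod_eq_zero (i := r / 2) (mem_range.2 h) ?_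
  obtain ⟨m, rfl | rfl⟩ := Nat.even_or_odd' r
  · simp [Nat.mul_div_cancel_left m two_pos]
  · rw [show (2 * m + 1) / 2 = m by omega]; push_cast; ring

theorem succ_mul_monsterTerm (a : K) (r l : ℕ) :
    (r + 1) * monsterTerm a r l = (r + 1 - 2 * l) * monsterTerm a (r + 1) l := by
  induction l with
  | zero => simp [monsterTerm]
  | succ l ih =>
    simp only [monsterTerm, prod_range_succ] at ih ⊢
    push_cast at ih ⊢
    linear_combination ((r - 2 * l) * (r - 2 * l - 1)) / ((2 * l + 2) * (2 * a + 2 * l + 1)) * ih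

def monsterCertificate (a : K) (r l : ℕ) : K :=
  2 * l * (2 * l + 2 * a - 1) / ((r + 1) * (r + 2 * a)) * monsterTerm a (r + 1) l

section Ordered

variable [LinearOrder K] [IsStrictOrderedRing K] {a : K}

theorem monsterTerm_succ_sub (ha : 0 < a) (r l : ℕ) :
    monsterTerm a (r + 1) l - 2 * (r + a) / (r + 2 * a) * monsterTerm a r l =
      monsterCertificate a r l - monsterCertificate a r (l + 1) := by
  have hr : (r : K) + 1 ≠ 0 := by positivity
  have hra : (r : K) + 2 * a ≠ 0 := by positivity
  have hT : monsterTerm a r l = (r + 1 - 2 * l) * monsterTerm a (r + 1) l / (r + 1) := by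
    rw [eq_div_iff hr, mul_comm]; exact succ_mul_monsterTerm a r l
  simp only [monsterCertificate, monsterTerm, prod_range_succ] at hT ⊢
  rw [hT]
  push_cast
  field_simp
  ring

theorem sum_monsterTerm_succ (ha : 0 < a) (r : ℕ) :
    ∑ l ∈ range (r + 2), monsterTerm a (r + 1) l =
      2 * (r + a) / (r + 2 * a) * ∑ l ∈ range (r + 1), monsterTerm a r l := by
  have hvanish : monsterTerm a (r + 1) (r + 1) = 0 := monsterTerm_eq_zero_of_lt a (by omega)
  have htele := sum_range_sub' (monsterCertificate a r) (r + 1)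
  simp only [← monsterTerm_succ_sub ha, sum_sub_distrib, ← mul_sum] at htele
  rw [sum_range_succ, hvanish, add_zero, ← sub_eq_zero, htele]
  simp [monsterCertificate, hvanish]

theorem sum_monsterTerm (ha : 0 < a) (r : ℕ) :
    ∑ l ∈ range (r + 1), monsterTerm a r l =
      2 ^ r * (ascPochhammer K r).eval a / (ascPochhammer K r).eval (2 * a) := by
  induction r with
  | zero => simp [monsterTerm]
  | succ r ih =>
    have hpos := ascPochhammer_pos r (2 * a) (by positivity)
    have hra : (r : K) + 2 * a ≠ 0 := by positivity
    rw [sum_monsterTerm_succ ha, ih, ascPochhammer_succ_eval, ascPochhammer_succ_eval]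
    field_simp
    ring

end Ordered

theorem natCast_choose_eq_ascPochhammer_div (n k : ℕ) :
    ((k + n - 1).choose k : ℚ) = (ascPochhammer ℚ k).eval (n : ℚ) / k.factorial := by
  rw [ascPochhammer_nat_eq_natCast_ascFactorial, Nat.ascFactorial_eq_factorial_mul_choose',
    add_comm n]
  push_cast
  field_simp

theorem monster_identity_one_general (r κ : ℕ) (hκ : 1 ≤ κ) :
    ∑ l ∈ Finset.range (r / 2 + 1), ∏ j ∈ Finset.range l,
        (((r : ℚ) - 2 * j) * ((r : ℚ) - 2 * j - 1)) /
          ((2 * (j : ℚ) + 2) * (2 * (κ : ℚ) + 2 * j + 1)) =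
      2 ^ r * ((r + κ - 1).choose r : ℚ) / ((r + 2 * κ - 1).choose r : ℚ) := by
  have hκ' : (0 : ℚ) < κ := by exact_mod_cast hκ
  calc _ = ∑ l ∈ range (r / 2 + 1), monsterTerm (κ : ℚ) r l := rfl
    _ = ∑ l ∈ range (r + 1), monsterTerm (κ : ℚ) r l :=
      sum_subset (range_subset_range.2 (by omega)) fun l _ hl =>
        monsterTerm_eq_zero_of_lt _ (by simpa using hl)
    _ = 2 ^ r * (ascPochhammer ℚ r).eval (κ : ℚ) / (ascPochhammer ℚ r).eval (2 * κ : ℚ) :=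
      sum_monsterTerm hκ' r
    _ = _ := by
      rw [natCast_choose_eq_ascPochhammer_div, natCast_choose_eq_ascPochhammer_div]
      push_cast
      field_simp

/-- For positive integers `r, κ`:
`∑_{l=0}^{⌊r/2⌋} ∏_{j=0}^{l-1} (r-2j)(r-2j-1) / ((2j+2)(2κ+2j+1))
  = 2^r · C(r+κ-1, r) / C(r+2κ-1, r)`. -/
theorem monster_identity_one (r κ : ℕ) (hr : 1 ≤ r) (hκ : 1 ≤ κ) :
    ∑ l ∈ Finset.range (r / 2 + 1), ∏ j ∈ Finset.range l,
        (((r : ℚ) - 2 * j) * ((r : ℚ) - 2 * j - 1)) /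
          ((2 * (j : ℚ) + 2) * (2 * (κ : ℚ) + 2 * j + 1)) =
      2 ^ r * ((r + κ - 1).choose r : ℚ) / ((r + 2 * κ - 1).choose r : ℚ) :=
  monster_identity_one_general r κ hκ
end

section
/- For all positive integers r and κ', the finite sum ∑_{i=0}^{⌊r/2⌋} ∏_{l=0}^{i-1} [(r-2l)²(r-2l-1)²] / [(2i-2l)(2i+2κ'-2l)(r-2i+2l+1)(r-2i+2l+2)] equals 2^{-r} · binom(2κ'+2r, r) / binom(κ'+r, r), where the empty product corresponding to i = 0 has value one. -/
open Polynomial Finset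

lemma key_poly (n r : ℕ) (hrn : r ≤ n) :
    ∑ i ∈ Finset.range (r / 2 + 1),
      2 ^ (r - 2 * i) * ((r - i).choose i) * (n.choose (r - i)) = (2 * n).choose r := by
  have h1 : ((X + 1 : ℕ[X]) ^ (2 * n)).coeff r = (2 * n).choose r :=
    coeff_X_add_one_pow ℕ (2 * n) r
  have h2 : (X + 1 : ℕ[X]) ^ (2 * n) = (X * (X + C 2) + 1) ^ n := by
    rw [pow_mul]; ring_nf; simp [C_eq_natCast]
  have h3 : (X * (X + C 2) + 1 : ℕ[X]) ^ n
      = ∑ j ∈ Finset.range (n + 1), (X * (X + C 2)) ^ j * C ((n.choose j : ℕ)) := by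
    rw [add_pow]
    refine Finset.sum_congr rfl fun j hj => ?_
    simp [C_eq_natCast]
  have h4 : (2 * n).choose r
      = ∑ j ∈ Finset.range (n + 1),
          (if j ≤ r then 2 ^ (j - (r - j)) * (j.choose (r - j)) else 0) * n.choose j := by
    rw [← h1, h2, h3, finset_sum_coeff]
    refine Finset.sum_congr rfl fun j hj => ?_
    rw [coeff_mul_C, mul_pow, mul_comm (X ^ j), coeff_mul_X_pow']
    split_ifs with h
    · rw [coeff_X_add_C_pow]; push_cast; ring
    · simp
  calc ∑ i ∈ Finset.range (r / 2 + 1),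
        2 ^ (r - 2 * i) * ((r - i).choose i) * (n.choose (r - i))
      = ∑ i ∈ Finset.range (r + 1),
        2 ^ (r - 2 * i) * ((r - i).choose i) * (n.choose (r - i)) := by
        apply Finset.sum_subset
        · intro x hx; simp only [Finset.mem_range] at *; omega
        · intro x hx hx'
          simp only [Finset.mem_range] at hx hx'
          rw [Nat.choose_eq_zero_of_lt (show r - x < x by omega)]
          ring
    _ = ∑ j ∈ Finset.range (r + 1), 2 ^ (j - (r - j)) * (j.choose (r - j)) * n.choose j := by
        rw [← Finset.sum_range_reflect (fun j => 2 ^ (j - (r - j)) * (j.choose (r - j)) * n.choose j) (r + 1)]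
        refine Finset.sum_congr rfl fun j hj => ?_
        simp only [Finset.mem_range] at hj
        have e1 : r + 1 - 1 - j = r - j := by omega
        have e2 : r - (r - j) = j := by omega
        have e3 : r - j - j = r - 2 * j := by omega
        simp only [e1, e2, e3]
    _ = ∑ j ∈ Finset.range (r + 1),
          (if j ≤ r then 2 ^ (j - (r - j)) * (j.choose (r - j)) else 0) * n.choose j := by
        refine Finset.sum_congr rfl fun j hj => ?_
        simp only [Finset.mem_range] at hj
        rw [if_pos (by omega)]
    _ = ∑ j ∈ Finset.range (n + 1),
          (if j ≤ r then 2 ^ (j - (r - j)) * (j.choose (r - j)) else 0) * n.choose j := by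
        apply Finset.sum_subset
        · intro x hx; simp only [Finset.mem_range] at *; omega
        · intro x hx hx'
          simp only [Finset.mem_range] at hx hx'
          rw [if_neg (by omega)]
          ring
    _ = (2 * n).choose r := h4.symm


lemma L1 (r : ℕ) : ∀ i : ℕ, 2 * i ≤ r →
    ∏ l ∈ Finset.range i, (((r : ℚ) - 2 * l) * ((r : ℚ) - 2 * l - 1))
      = (r.factorial : ℚ) / ((r - 2 * i).factorial : ℚ) := by
  intro i
  induction i with
  | zero => simp [div_self (show ((r.factorial : ℚ)) ≠ 0 by exact_mod_cast r.factorial_ne_zero)]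
  | succ i ih =>
    intro h
    rw [Finset.prod_range_succ, ih (by omega)]
    have hm : r - 2 * i = (r - 2 * (i + 1)) + 2 := by omega
    have hc1 : ((r : ℚ) - 2 * i) = ((r - 2 * (i + 1) : ℕ) : ℚ) + 2 := by
      have : (r : ℚ) = ((r - 2 * (i + 1) : ℕ) : ℚ) + 2 * (i + 1) := by
        push_cast [Nat.cast_sub (show 2 * (i+1) ≤ r from h)]; ring
      rw [this]; push_cast; ring
    have hc2 : ((r : ℚ) - 2 * i - 1) = ((r - 2 * (i + 1) : ℕ) : ℚ) + 1 := by
      rw [hc1]; ring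
    rw [hm, hc2, hc1]
    set m := r - 2 * (i + 1)
    rw [show m + 2 = (m + 1) + 1 from rfl, Nat.factorial_succ, Nat.factorial_succ]
    have h1 : ((m.factorial : ℚ)) ≠ 0 := by exact_mod_cast m.factorial_ne_zero
    push_cast
    field_simp
    ring

lemma L2 (i : ℕ) : ∏ l ∈ Finset.range i, (2 * (i : ℚ) - 2 * l)
    = 2 ^ i * (i.factorial : ℚ) := by
  rw [← Finset.prod_range_reflect]
  have : ∀ l ∈ Finset.range i, (2 * (i : ℚ) - 2 * ((i - 1 - l : ℕ) : ℚ))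
      = 2 * ((l : ℚ) + 1) := by
    intro l hl
    simp only [Finset.mem_range] at hl
    rw [Nat.cast_sub (by omega), Nat.cast_sub (by omega)]
    ring
  rw [Finset.prod_congr rfl this, Finset.prod_mul_distrib, Finset.prod_const,
    Finset.card_range]
  congr 1
  have := congrArg (Nat.cast : ℕ → ℚ) (Finset.prod_range_add_one_eq_factorial i)
  push_cast at this
  exact this

lemma L3 (k : ℕ) : ∀ i : ℕ, ∏ l ∈ Finset.range i, ((k : ℚ) + l + 1)
    = ((k + i).factorial : ℚ) / (k.factorial : ℚ) := by
  intro i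
  induction i with
  | zero => simp [div_self (show ((k.factorial : ℚ)) ≠ 0 by exact_mod_cast k.factorial_ne_zero)]
  | succ i ih =>
    rw [Finset.prod_range_succ, ih, show k + (i + 1) = (k + i) + 1 from rfl,
      Nat.factorial_succ]
    have h1 : ((k.factorial : ℚ)) ≠ 0 := by exact_mod_cast k.factorial_ne_zero
    push_cast
    field_simp

lemma L3' (k i : ℕ) : ∏ l ∈ Finset.range i, (2 * (i : ℚ) + 2 * k - 2 * l)
    = 2 ^ i * ((k + i).factorial : ℚ) / (k.factorial : ℚ) := by
  rw [← Finset.prod_range_reflect]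
  have : ∀ l ∈ Finset.range i, (2 * (i : ℚ) + 2 * k - 2 * ((i - 1 - l : ℕ) : ℚ))
      = 2 * ((k : ℚ) + l + 1) := by
    intro l hl
    simp only [Finset.mem_range] at hl
    rw [Nat.cast_sub (by omega), Nat.cast_sub (by omega)]
    push_cast
    ring
  rw [Finset.prod_congr rfl this, Finset.prod_mul_distrib, Finset.prod_const, Finset.card_range, L3]
  ring

lemma L4 (r i : ℕ) (h : 2 * i ≤ r) :
    ∏ l ∈ Finset.range i, (((r : ℚ) - 2 * i + 2 * l + 1) * ((r : ℚ) - 2 * i + 2 * l + 2))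
      = (r.factorial : ℚ) / ((r - 2 * i).factorial : ℚ) := by
  rw [← Finset.prod_range_reflect]
  have : ∀ l ∈ Finset.range i,
      (((r : ℚ) - 2 * i + 2 * ((i - 1 - l : ℕ) : ℚ) + 1) * ((r : ℚ) - 2 * i + 2 * ((i - 1 - l : ℕ) : ℚ) + 2))
      = (((r : ℚ) - 2 * l) * ((r : ℚ) - 2 * l - 1)) := by
    intro l hl
    simp only [Finset.mem_range] at hl
    rw [Nat.cast_sub (by omega), Nat.cast_sub (by omega)]
    push_cast
    ring
  rw [Finset.prod_congr rfl this, L1 r i h]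

lemma term_eval (r k i : ℕ) (h : 2 * i ≤ r) :
    ∏ l ∈ Finset.range i,
        (((r : ℚ) - 2 * l) ^ 2 * ((r : ℚ) - 2 * l - 1) ^ 2) /
          ((2 * (i : ℚ) - 2 * l) * (2 * (i : ℚ) + 2 * k - 2 * l) *
            ((r : ℚ) - 2 * i + 2 * l + 1) * ((r : ℚ) - 2 * i + 2 * l + 2))
      = 2 ^ (r - 2 * i) * (((r - i).choose i : ℕ) : ℚ) * (((k + r).choose (r - i) : ℕ) : ℚ)
          / (2 ^ r * (((k + r).choose r : ℕ) : ℚ)) := by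
  have hsplit : ∀ l ∈ Finset.range i,
      (((r : ℚ) - 2 * l) ^ 2 * ((r : ℚ) - 2 * l - 1) ^ 2) /
          ((2 * (i : ℚ) - 2 * l) * (2 * (i : ℚ) + 2 * k - 2 * l) *
            ((r : ℚ) - 2 * i + 2 * l + 1) * ((r : ℚ) - 2 * i + 2 * l + 2))
      = (((r : ℚ) - 2 * l) * ((r : ℚ) - 2 * l - 1)) ^ 2 /
          ((2 * (i : ℚ) - 2 * l) * ((2 * (i : ℚ) + 2 * k - 2 * l) *
            (((r : ℚ) - 2 * i + 2 * l + 1) * ((r : ℚ) - 2 * i + 2 * l + 2)))) := by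
    intro l _
    ring
  rw [Finset.prod_congr rfl hsplit, Finset.prod_div_distrib, Finset.prod_pow, L1 r i h,
    Finset.prod_mul_distrib, Finset.prod_mul_distrib, L2, L3', L4 r i h]
  rw [Nat.cast_choose ℚ (show i ≤ r - i by omega),
    Nat.cast_choose ℚ (show r - i ≤ k + r by omega),
    Nat.cast_choose ℚ (show r ≤ k + r by omega),
    show r - i - i = r - 2 * i from by omega,
    show k + r - (r - i) = k + i from by omega,
    show k + r - r = k from by omega]
  have hp : (2 : ℚ) ^ r = 2 ^ (r - 2 * i) * 2 ^ i * 2 ^ i := by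
    rw [← pow_add, ← pow_add]
    congr 1
    omega
  rw [hp]
  have f1 : ((r.factorial : ℚ)) ≠ 0 := by exact_mod_cast r.factorial_ne_zero
  have f2 : (((r - 2 * i).factorial : ℚ)) ≠ 0 := by exact_mod_cast (r - 2*i).factorial_ne_zero
  have f3 : ((i.factorial : ℚ)) ≠ 0 := by exact_mod_cast i.factorial_ne_zero
  have f4 : ((k.factorial : ℚ)) ≠ 0 := by exact_mod_cast k.factorial_ne_zero
  have f5 : (((k + i).factorial : ℚ)) ≠ 0 := by exact_mod_cast (k + i).factorial_ne_zero
  have f6 : (((k + r).factorial : ℚ)) ≠ 0 := by exact_mod_cast (k + r).factorial_ne_zero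
  have f7 : (((r - i).factorial : ℚ)) ≠ 0 := by exact_mod_cast (r - i).factorial_ne_zero
  field_simp


/-- For positive integers `r, κ'`:
`∑_{i=0}^{⌊r/2⌋} ∏_{l=0}^{i-1} (r-2l)²(r-2l-1)² /
    ((2i-2l)(2i+2κ'-2l)(r-2i+2l+1)(r-2i+2l+2))
  = 2^{-r} · C(2κ'+2r, r) / C(κ'+r, r)`. -/
theorem monster_identity_two (r κ' : ℕ) (hr : 1 ≤ r) (hκ' : 1 ≤ κ') :
    ∑ i ∈ Finset.range (r / 2 + 1), ∏ l ∈ Finset.range i,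
        (((r : ℚ) - 2 * l) ^ 2 * ((r : ℚ) - 2 * l - 1) ^ 2) /
          ((2 * (i : ℚ) - 2 * l) * (2 * (i : ℚ) + 2 * κ' - 2 * l) *
            ((r : ℚ) - 2 * i + 2 * l + 1) * ((r : ℚ) - 2 * i + 2 * l + 2)) =
      (2 : ℚ) ^ (-(r : ℤ)) * ((2 * κ' + 2 * r).choose r : ℚ) / ((κ' + r).choose r : ℚ) := by
  have h1 : ∑ i ∈ Finset.range (r / 2 + 1), ∏ l ∈ Finset.range i,
        (((r : ℚ) - 2 * l) ^ 2 * ((r : ℚ) - 2 * l - 1) ^ 2) /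
          ((2 * (i : ℚ) - 2 * l) * (2 * (i : ℚ) + 2 * κ' - 2 * l) *
            ((r : ℚ) - 2 * i + 2 * l + 1) * ((r : ℚ) - 2 * i + 2 * l + 2))
      = ∑ i ∈ Finset.range (r / 2 + 1),
          2 ^ (r - 2 * i) * (((r - i).choose i : ℕ) : ℚ) * (((κ' + r).choose (r - i) : ℕ) : ℚ)
            / (2 ^ r * (((κ' + r).choose r : ℕ) : ℚ)) := by
    refine Finset.sum_congr rfl fun i hi => ?_
    simp only [Finset.mem_range] at hi
    exact term_eval r κ' i (by omega)
  rw [h1, ← Finset.sum_div]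
  have h2 : ∑ i ∈ Finset.range (r / 2 + 1),
      (2 : ℚ) ^ (r - 2 * i) * (((r - i).choose i : ℕ) : ℚ) * (((κ' + r).choose (r - i) : ℕ) : ℚ)
      = (((2 * (κ' + r)).choose r : ℕ) : ℚ) := by
    have := congrArg (Nat.cast : ℕ → ℚ) (key_poly (κ' + r) r (by omega))
    push_cast at this
    rw [← this]
  rw [h2, show 2 * (κ' + r) = 2 * κ' + 2 * r from by ring, zpow_neg, zpow_natCast]
  have hc : (((κ' + r).choose r : ℕ) : ℚ) ≠ 0 := by
    exact_mod_cast (Nat.choose_pos (show r ≤ κ' + r by omega)).ne'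
  have h2r : ((2 : ℚ) ^ r) ≠ 0 := pow_ne_zero r two_ne_zero
  field_simp
end

section
/- For all positive integers r and κ, setting ε ∈ {0,1} with ε ≡ 1 + r (mod 2), one has ∑_{l=0}^{⌊r/2⌋} ∏_{j=0}^{l-1} [(r-2j)(r-2j-1)] / [(2j+2)(2κ+2j+1)] = (Γ(κ+1/2)/Γ((ε-r)/2)) · ∑_{l=0}^{⌊r/2⌋} (-1)^l · binom(⌊r/2⌋, l) · Γ(l+(ε-r)/2) / Γ(l+κ+1/2), where Γ is the real Gamma function and the empty product corresponding to l = 0 has value one. -/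
/-!
Put `m = ⌊r/2⌋`, `a = (ε - r)/2`, `b = κ + 1/2`. The parity condition says `2m = r + ε - 1`, and
then the `j`-th factor on the left is `-(m - j)(a + j) / ((j + 1)(b + j))`, so the `l`-th summand
is `(-1)^l C(m, l) (a)_l / (b)_l`, the `l`-th term of `₂F₁(-m, a; b; 1)`. Since
`Γ(l + s) = (s)_l Γ(s)` whenever `s` is not a nonpositive integer, and `a` is not one because
`r - ε` is odd, the Pochhammer ratio is `Γ(b) Γ(l + a) / (Γ(a) Γ(l + b))`.
-/

open Finset

theorem Real.Gamma_nat_add_eq_prod_mul {a : ℝ} (ha : ∀ n : ℕ, a ≠ -n) (l : ℕ) :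
    Real.Gamma (l + a) = (∏ j ∈ range l, (a + j)) * Real.Gamma a := by
  induction l with
  | zero => simp
  | succ n ih =>
    have hn : (n : ℝ) + a ≠ 0 := fun h => ha n (by linarith)
    rw [Nat.cast_succ, add_right_comm, Real.Gamma_add_one hn, ih, prod_range_succ]
    ring

theorem Nat.cast_choose_eq_prod_div {K : Type*} [Field K] [CharZero K] (m l : ℕ) :
    (m.choose l : K) = ∏ j ∈ range l, ((m : K) - j) / (j + 1) := by
  rw [Nat.cast_choose_eq_descPochhammer_div, descPochhammer_eval_eq_prod_range,
    prod_div_distrib, ← prod_range_add_one_eq_factorial, Nat.cast_prod]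
  push_cast
  rfl

theorem prod_hypergeometric_ratio_eq_choose_mul_Gamma {a b : ℝ} (ha : ∀ n : ℕ, a ≠ -n)
    (hb : ∀ n : ℕ, b ≠ -n) (m l : ℕ) :
    ∏ j ∈ range l, -(((m : ℝ) - j) * (a + j)) / ((j + 1) * (b + j)) =
      Real.Gamma b / Real.Gamma a *
        ((-1) ^ l * (m.choose l : ℝ) * Real.Gamma (l + a) / Real.Gamma (l + b)) := by
  have hPb : ∏ j ∈ range l, (b + j) ≠ 0 :=
    prod_ne_zero_iff.mpr fun j _ h => hb j (by linarith)
  rw [Real.Gamma_nat_add_eq_prod_mul ha, Real.Gamma_nat_add_eq_prod_mul hb,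
    Nat.cast_choose_eq_prod_div]
  have hfac : ∀ j ∈ range l, -(((m : ℝ) - j) * (a + j)) / ((j + 1) * (b + j)) =
      -1 * (((m : ℝ) - j) / (j + 1)) * ((a + j) / (b + j)) := fun j _ => by
    rw [neg_div, mul_div_mul_comm]; ring
  rw [prod_congr rfl hfac, prod_mul_distrib, prod_mul_distrib, prod_const, card_range,
    prod_div_distrib (f := fun j : ℕ => a + j)]
  field_simp [Real.Gamma_ne_zero ha, Real.Gamma_ne_zero hb]

theorem hypergeometric_ratio_of_two_mul_eq {K : Type*} [Field K] [CharZero K]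
    {r ε m : K} (h2m : 2 * m = r + ε - 1) (hε : ε * ε = ε) (κ j : K) :
    (r - 2 * j) * (r - 2 * j - 1) / ((2 * j + 2) * (2 * κ + 2 * j + 1)) =
      -((m - j) * ((ε - r) / 2 + j)) / ((j + 1) * (κ + 1 / 2 + j)) := by
  have hnum : (r - 2 * j) * (r - 2 * j - 1) = 4 * -((m - j) * ((ε - r) / 2 + j)) := by
    linear_combination (ε - r + 2 * j) * h2m + hε
  have hden : (2 * j + 2) * (2 * κ + 2 * j + 1) = 4 * ((j + 1) * (κ + 1 / 2 + j)) := by ring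
  rw [hnum, hden, mul_div_mul_left _ _ (by norm_num : (4 : K) ≠ 0)]

theorem monster_identity_one_gamma_form_general (r κ : ℕ)
    (ε : ℕ) (hε : ε < 2) (hmod : ε % 2 = (1 + r) % 2) :
    ∑ l ∈ Finset.range (r / 2 + 1), ∏ j ∈ Finset.range l,
        (((r : ℝ) - 2 * j) * ((r : ℝ) - 2 * j - 1)) /
          ((2 * (j : ℝ) + 2) * (2 * (κ : ℝ) + 2 * j + 1)) =
      Real.Gamma ((κ : ℝ) + 1 / 2) / Real.Gamma (((ε : ℝ) - r) / 2) *
        ∑ l ∈ Finset.range (r / 2 + 1),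
          (-1 : ℝ) ^ l * ((r / 2).choose l : ℝ) *
            Real.Gamma ((l : ℝ) + ((ε : ℝ) - r) / 2) /
              Real.Gamma ((l : ℝ) + κ + 1 / 2) := by
  have h2m : 2 * ((r / 2 : ℕ) : ℝ) = r + ε - 1 := by
    have : 2 * (r / 2) + 1 = r + ε := by omega
    linarith [(by exact_mod_cast this : 2 * ((r / 2 : ℕ) : ℝ) + 1 = r + ε)]
  have hεε : (ε : ℝ) * ε = ε := by interval_cases ε <;> norm_num
  have ha : ∀ n : ℕ, ((ε : ℝ) - r) / 2 ≠ -n := fun n h => by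
    have : ε + 2 * n = r := by exact_mod_cast (by linarith : (ε : ℝ) + 2 * n = r)
    omega
  have hb : ∀ n : ℕ, (κ : ℝ) + 1 / 2 ≠ -n := fun n h => by
    linarith [(Nat.cast_nonneg κ : (0 : ℝ) ≤ κ), (Nat.cast_nonneg n : (0 : ℝ) ≤ n)]
  rw [mul_sum]
  refine sum_congr rfl fun l _ => ?_
  rw [prod_congr rfl fun j _ => hypergeometric_ratio_of_two_mul_eq h2m hεε _ _,
    prod_hypergeometric_ratio_eq_choose_mul_Gamma ha hb, add_assoc]

/-- The sum of Lemma A.2 can be rewritten in terms of Gamma values: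
for positive integers `r, κ`, with `ε ∈ {0,1}`, `ε ≡ 1 + r (mod 2)`,
`∑_{l=0}^{⌊r/2⌋} ∏_{j=0}^{l-1} (r-2j)(r-2j-1)/((2j+2)(2κ+2j+1))
  = Γ(κ+1/2)/Γ((ε-r)/2) · ∑_{l=0}^{⌊r/2⌋} (-1)^l C(⌊r/2⌋,l) Γ(l+(ε-r)/2)/Γ(l+κ+1/2)`. -/
theorem monster_identity_one_gamma_form (r κ : ℕ) (hr : 1 ≤ r) (hκ : 1 ≤ κ)
    (ε : ℕ) (hε : ε < 2) (hmod : ε % 2 = (1 + r) % 2) :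
    ∑ l ∈ Finset.range (r / 2 + 1), ∏ j ∈ Finset.range l,
        (((r : ℝ) - 2 * j) * ((r : ℝ) - 2 * j - 1)) /
          ((2 * (j : ℝ) + 2) * (2 * (κ : ℝ) + 2 * j + 1)) =
      Real.Gamma ((κ : ℝ) + 1 / 2) / Real.Gamma (((ε : ℝ) - r) / 2) *
        ∑ l ∈ Finset.range (r / 2 + 1),
          (-1 : ℝ) ^ l * ((r / 2).choose l : ℝ) *
            Real.Gamma ((l : ℝ) + ((ε : ℝ) - r) / 2) /
              Real.Gamma ((l : ℝ) + κ + 1 / 2) :=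
  monster_identity_one_gamma_form_general r κ ε hε hmod
end

section
/- For all positive integers r and κ', setting ε ∈ {0,1} with ε ≡ 1 + r (mod 2), one has ∑_{i=0}^{⌊r/2⌋} ∏_{l=0}^{i-1} [(r-2l)²(r-2l-1)²] / [(2i-2l)(2i+2κ'-2l)(r-2i+2l+1)(r-2i+2l+2)] = (Γ(κ'+1)/Γ((ε-r)/2)) · ∑_{i=0}^{⌊r/2⌋} (-1)^i · binom(⌊r/2⌋, i) · Γ(i+(ε-r)/2) / Γ(i+κ'+1), where Γ is the real Gamma function and the empty product corresponding to i = 0 has value one. -/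
open Finset

lemma gamma_shift (x : ℝ) (hx : ∀ l : ℕ, x + l ≠ 0) (i : ℕ) :
    Real.Gamma (x + i) = Real.Gamma x * ∏ l ∈ Finset.range i, (x + l) := by
  induction i with
  | zero => simp
  | succ n ih =>
    have h : x + (n + 1 : ℕ) = (x + n) + 1 := by push_cast; ring
    rw [h, Real.Gamma_add_one (hx n), Finset.prod_range_succ, ih]
    ring

/-- The sum of Lemma A.3 can be rewritten in terms of Gamma values:
for positive integers `r, κ'`, with `ε ∈ {0,1}`, `ε ≡ 1 + r (mod 2)`,
`∑_{i=0}^{⌊r/2⌋} ∏_{l=0}^{i-1} (r-2l)²(r-2l-1)² /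
    ((2i-2l)(2i+2κ'-2l)(r-2i+2l+1)(r-2i+2l+2))
  = Γ(κ'+1)/Γ((ε-r)/2) · ∑_{i=0}^{⌊r/2⌋} (-1)^i C(⌊r/2⌋,i) Γ(i+(ε-r)/2)/Γ(i+κ'+1)`. -/
theorem monster_identity_two_gamma_form (r κ' : ℕ) (hr : 1 ≤ r) (hκ' : 1 ≤ κ')
    (ε : ℕ) (hε : ε < 2) (hmod : ε % 2 = (1 + r) % 2) :
    ∑ i ∈ Finset.range (r / 2 + 1), ∏ l ∈ Finset.range i,
        (((r : ℝ) - 2 * l) ^ 2 * ((r : ℝ) - 2 * l - 1) ^ 2) /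
          ((2 * (i : ℝ) - 2 * l) * (2 * (i : ℝ) + 2 * κ' - 2 * l) *
            ((r : ℝ) - 2 * i + 2 * l + 1) * ((r : ℝ) - 2 * i + 2 * l + 2)) =
      Real.Gamma ((κ' : ℝ) + 1) / Real.Gamma (((ε : ℝ) - r) / 2) *
        ∑ i ∈ Finset.range (r / 2 + 1),
          (-1 : ℝ) ^ i * ((r / 2).choose i : ℝ) *
            Real.Gamma ((i : ℝ) + ((ε : ℝ) - r) / 2) /
              Real.Gamma ((i : ℝ) + κ' + 1) := by
  set m := r / 2 with hm
  set s : ℝ := ((ε : ℝ) - r) / 2 with hs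
  have hsl : ∀ l : ℕ, s + l ≠ 0 := by
    intro l h
    have h1 : ((ε + 2 * l : ℕ) : ℝ) = ((r : ℕ) : ℝ) := by
      push_cast
      rw [hs] at h
      linarith
    have h2 : ε + 2 * l = r := Nat.cast_injective h1
    omega
  have hGs : Real.Gamma s ≠ 0 := by
    refine Real.Gamma_ne_zero fun n hn => hsl n ?_
    rw [hn]; ring
  have hGk : Real.Gamma ((κ' : ℝ) + 1) ≠ 0 :=
    ne_of_gt (Real.Gamma_pos_of_pos (by positivity))
  have hεr : ∀ l : ℕ,
      ((r : ℝ) - 2 * l) * ((r : ℝ) - 2 * l - 1) = 4 * ((m : ℝ) - l) * (-s - l) := by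
    intro l
    rcases Nat.even_or_odd r with ⟨k, hk⟩ | ho
    · have hε1 : ε = 1 := by omega
      have h2r : r = 2 * m := by omega
      have h2r' : (r : ℝ) = 2 * m := by exact_mod_cast congrArg Nat.cast h2r
      rw [hs, hε1, h2r']; push_cast; ring
    · have hε0 : ε = 0 := by rcases ho with ⟨k, hk⟩; omega
      have h2r : r = 2 * m + 1 := by rcases ho with ⟨k, hk⟩; omega
      have h2r' : (r : ℝ) = 2 * m + 1 := by exact_mod_cast congrArg Nat.cast h2r
      rw [hs, hε0, h2r']; push_cast; ring
  rw [Finset.mul_sum]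
  refine Finset.sum_congr rfl fun i hi => ?_
  have him : i ≤ m := Nat.lt_succ_iff.mp (Finset.mem_range.mp hi)
  -- Gamma rewrites on the RHS
  have hG1 : Real.Gamma ((i : ℝ) + s) = Real.Gamma s * ∏ l ∈ range i, (s + l) := by
    rw [add_comm]; exact gamma_shift s hsl i
  have hG2 : Real.Gamma ((i : ℝ) + κ' + 1) =
      Real.Gamma ((κ' : ℝ) + 1) * ∏ l ∈ range i, ((κ' : ℝ) + 1 + l) := by
    have h := gamma_shift ((κ' : ℝ) + 1) (fun l => by positivity) i
    rw [← h]; congr 1; ring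
  -- LHS manipulation
  have step1 : ∀ l ∈ range i,
      (((r : ℝ) - 2 * l) ^ 2 * ((r : ℝ) - 2 * l - 1) ^ 2) /
          ((2 * (i : ℝ) - 2 * l) * (2 * (i : ℝ) + 2 * κ' - 2 * l) *
            ((r : ℝ) - 2 * i + 2 * l + 1) * ((r : ℝ) - 2 * i + 2 * l + 2)) =
      ((((r : ℝ) - 2 * l) * ((r : ℝ) - 2 * l - 1)) *
          (((r : ℝ) - 2 * l) * ((r : ℝ) - 2 * l - 1))) /
        (((2 * (i : ℝ) - 2 * l) * (2 * (i : ℝ) + 2 * κ' - 2 * l)) *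
          (((r : ℝ) - 2 * i + 2 * l + 1) * ((r : ℝ) - 2 * i + 2 * l + 2))) := by
    intro l _; ring
  rw [Finset.prod_congr rfl step1, Finset.prod_div_distrib]
  have hA : ∏ l ∈ range i, (2 * (i : ℝ) - 2 * l) = ∏ l ∈ range i, (2 * (l : ℝ) + 2) := by
    rw [← Finset.prod_range_reflect (fun l => (2 * (l : ℝ) + 2)) i]
    refine Finset.prod_congr rfl fun l hl => ?_
    have hl' : l < i := Finset.mem_range.mp hl
    rw [show i - 1 - l = i - (l + 1) by omega, Nat.cast_sub (by omega : l + 1 ≤ i)]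
    push_cast; ring
  have hB : ∏ l ∈ range i, (2 * (i : ℝ) + 2 * κ' - 2 * l) =
      ∏ l ∈ range i, (2 * (κ' : ℝ) + 2 * l + 2) := by
    rw [← Finset.prod_range_reflect (fun l => (2 * (κ' : ℝ) + 2 * l + 2)) i]
    refine Finset.prod_congr rfl fun l hl => ?_
    have hl' : l < i := Finset.mem_range.mp hl
    rw [show i - 1 - l = i - (l + 1) by omega, Nat.cast_sub (by omega : l + 1 ≤ i)]
    push_cast; ring
  have hC : ∏ l ∈ range i, (((r : ℝ) - 2 * i + 2 * l + 1) * ((r : ℝ) - 2 * i + 2 * l + 2)) =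
      ∏ l ∈ range i, (((r : ℝ) - 2 * l) * ((r : ℝ) - 2 * l - 1)) := by
    rw [← Finset.prod_range_reflect
      (fun l => (((r : ℝ) - 2 * l) * ((r : ℝ) - 2 * l - 1))) i]
    refine Finset.prod_congr rfl fun l hl => ?_
    have hl' : l < i := Finset.mem_range.mp hl
    rw [show i - 1 - l = i - (l + 1) by omega, Nat.cast_sub (by omega : l + 1 ≤ i)]
    push_cast; ring
  have hP : ∏ l ∈ range i, (((r : ℝ) - 2 * l) * ((r : ℝ) - 2 * l - 1)) =
      ∏ l ∈ range i, (4 * ((m : ℝ) - l) * (-s - l)) :=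
    Finset.prod_congr rfl fun l _ => hεr l
  have hnum : ∏ l ∈ range i,
      ((((r : ℝ) - 2 * l) * ((r : ℝ) - 2 * l - 1)) *
        (((r : ℝ) - 2 * l) * ((r : ℝ) - 2 * l - 1))) =
      (∏ l ∈ range i, (4 * ((m : ℝ) - l) * (-s - l))) *
        (∏ l ∈ range i, (4 * ((m : ℝ) - l) * (-s - l))) := by
    rw [Finset.prod_mul_distrib, hP]
  have hden : ∏ l ∈ range i,
      (((2 * (i : ℝ) - 2 * l) * (2 * (i : ℝ) + 2 * κ' - 2 * l)) *
        (((r : ℝ) - 2 * i + 2 * l + 1) * ((r : ℝ) - 2 * i + 2 * l + 2))) =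
      ((∏ l ∈ range i, (2 * (l : ℝ) + 2)) *
        (∏ l ∈ range i, (2 * (κ' : ℝ) + 2 * l + 2))) *
        (∏ l ∈ range i, (4 * ((m : ℝ) - l) * (-s - l))) := by
    rw [Finset.prod_mul_distrib, Finset.prod_mul_distrib, hA, hB, hC, hP]
  rw [hnum, hden]
  -- compute the auxiliary products
  have hfact : ∏ l ∈ range i, ((l : ℝ) + 1) = (Nat.factorial i : ℝ) := by
    rw [← Finset.prod_range_add_one_eq_factorial, Nat.cast_prod]
    push_cast; rfl
  have hD1 : ∏ l ∈ range i, (2 * (l : ℝ) + 2) = 2 ^ i * (Nat.factorial i : ℝ) := by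
    calc ∏ l ∈ range i, (2 * (l : ℝ) + 2) = ∏ l ∈ range i, (2 * ((l : ℝ) + 1)) := by
          exact Finset.prod_congr rfl fun l _ => by ring
      _ = (∏ _l ∈ range i, (2 : ℝ)) * ∏ l ∈ range i, ((l : ℝ) + 1) :=
          Finset.prod_mul_distrib
      _ = 2 ^ i * (Nat.factorial i : ℝ) := by rw [Finset.prod_const, Finset.card_range, hfact]
  have hD2 : ∏ l ∈ range i, (2 * (κ' : ℝ) + 2 * l + 2) =
      2 ^ i * ∏ l ∈ range i, ((κ' : ℝ) + 1 + l) := by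
    calc ∏ l ∈ range i, (2 * (κ' : ℝ) + 2 * l + 2)
        = ∏ l ∈ range i, (2 * ((κ' : ℝ) + 1 + l)) :=
          Finset.prod_congr rfl fun l _ => by ring
      _ = (∏ _l ∈ range i, (2 : ℝ)) * ∏ l ∈ range i, ((κ' : ℝ) + 1 + l) :=
          Finset.prod_mul_distrib
      _ = _ := by rw [Finset.prod_const, Finset.card_range]
  have hPm : ∏ l ∈ range i, ((m : ℝ) - l) = (Nat.factorial i : ℝ) * (m.choose i : ℝ) := by
    have h1 : ∏ l ∈ range i, ((m : ℝ) - l) = ((m.descFactorial i : ℕ) : ℝ) := by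
      rw [Nat.descFactorial_eq_prod_range, Nat.cast_prod]
      refine Finset.prod_congr rfl fun l hl => ?_
      rw [Nat.cast_sub (le_trans (Nat.le_of_lt_succ (Nat.lt_succ_of_lt
        (Finset.mem_range.mp hl))) him)]
    rw [h1, Nat.descFactorial_eq_factorial_mul_choose]; push_cast; ring
  have hPs : ∏ l ∈ range i, (4 * ((m : ℝ) - l) * (-s - l)) =
      4 ^ i * ((Nat.factorial i : ℝ) * (m.choose i : ℝ)) * ((-1) ^ i * ∏ l ∈ range i, (s + l)) := by
    calc ∏ l ∈ range i, (4 * ((m : ℝ) - l) * (-s - l))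
        = ∏ l ∈ range i, ((4 : ℝ) * (((m : ℝ) - l) * ((-1) * (s + l)))) :=
          Finset.prod_congr rfl fun l _ => by ring
      _ = (∏ _l ∈ range i, (4 : ℝ)) *
          ((∏ l ∈ range i, ((m : ℝ) - l)) *
            ((∏ _l ∈ range i, (-1 : ℝ)) * ∏ l ∈ range i, (s + l))) := by
          rw [Finset.prod_mul_distrib, Finset.prod_mul_distrib, Finset.prod_mul_distrib]
      _ = _ := by rw [Finset.prod_const, Finset.prod_const, Finset.card_range, hPm]; ring
  rw [hPs, hD1, hD2, hG1, hG2]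
  -- nonzero facts for final algebra
  have hs_ne : ∏ l ∈ range i, (s + l) ≠ 0 := Finset.prod_ne_zero_iff.mpr fun l _ => hsl l
  have hk_ne : ∏ l ∈ range i, ((κ' : ℝ) + 1 + l) ≠ 0 :=
    Finset.prod_ne_zero_iff.mpr fun l _ => by positivity
  have hfac_ne : (Nat.factorial i : ℝ) ≠ 0 := by exact_mod_cast i.factorial_ne_zero
  have hch_ne : (m.choose i : ℝ) ≠ 0 := by
    exact_mod_cast (Nat.choose_pos him).ne'
  field_simp
  have h4 : (4 : ℝ) ^ i = 2 ^ i * 2 ^ i := by rw [← mul_pow]; norm_num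
  rw [h4]; ring
end

section
/- Let κ and r be integers with r ≥ 0 and κ ≥ r + 2. Then 1 + ∑_{2 ≤ i ≤ r, i even} ∏_{0 ≤ l ≤ i-2, l even} [(r-l)²(r-l-1)²] / [(i-l)(i+2κ-2r-l-2)(r-i+l+1)(r-i+l+2)] = 2^{-r} · binom(2κ-2, r) / binom(κ-1, r). -/
/-!
Put `κ = n + r + 1`, `N = κ - 1 = n + r` and `i = 2m`. In the `i`-th product the last two
denominator factors at `l = 2j` are the numerator's `(r - l)(r - l - 1)` at `l = 2(m - 1 - j)`, so
the product collapses to `r.descFactorial (2m) / (4^m m! (n+1)(n+2)⋯(n+m))`, which is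
`C(N, r-m) C(r-m, m) 2^(r-2m) / (2^r C(N, r))`. The sum of the numerators over `m` is the
coefficient of `X^r` in `(X (X + 2) + 1)^N = (X + 1)^(2N)`, namely `C(2N, r)`.
-/
open Finset Polynomial Nat

theorem filter_even_range (n : ℕ) :
    (range n).filter Even = (range ((n + 1) / 2)).image (2 * ·) := by
  ext l
  simp only [mem_filter, mem_range, mem_image, Nat.even_iff]
  constructor
  · rintro ⟨hl, hev⟩
    exact ⟨l / 2, by omega, by omega⟩
  · rintro ⟨j, hj, rfl⟩
    omega

theorem one_add_sum_filter_two_le_even {M : Type*} [AddCommMonoidWithOne M] (f : ℕ → M)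
    (n : ℕ) (h0 : f 0 = 1) :
    1 + ∑ i ∈ (range (n + 1)).filter (fun i => 2 ≤ i ∧ Even i), f i =
      ∑ m ∈ range (n / 2 + 1), f (2 * m) := by
  have herase : (range (n + 1)).filter (fun i => 2 ≤ i ∧ Even i) =
      ((range (n + 1)).filter Even).erase 0 := by
    ext i
    simp only [mem_filter, mem_erase, mem_range, Nat.even_iff]
    omega
  rw [herase, ← h0, add_sum_erase _ _ (by simp), filter_even_range,
    show (n + 1 + 1) / 2 = n / 2 + 1 by omega, sum_image (fun _ _ _ _ h => by simpa using h)]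

theorem prod_range_sub_two_mul_eq_descFactorial {R : Type*} [CommRing R] (r m : ℕ) :
    ∏ j ∈ range m, (((r : R) - 2 * j) * ((r : R) - 2 * j - 1)) = r.descFactorial (2 * m) := by
  rw [← descPochhammer_eval_eq_descFactorial]
  induction m with
  | zero => simp
  | succ m ih =>
    rw [prod_range_succ, ih, mul_add, mul_one, descPochhammer_succ_eval, descPochhammer_succ_eval]
    push_cast
    ring

theorem prod_range_two_mul_add_two_eq_ascFactorial {R : Type*} [CommRing R] (n m : ℕ) :
    ∏ j ∈ range m, ((2 * (j : R) + 2) * (2 * n + 2 * j + 2)) =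
      4 ^ m * m ! * (n + 1).ascFactorial m := by
  induction m with
  | zero => simp
  | succ m ih =>
    rw [prod_range_succ, ih, Nat.ascFactorial_succ, factorial_succ]
    push_cast
    ring

theorem prod_filter_even_eq_descFactorial_div (n r m : ℕ) (hm : 2 * m ≤ r) :
    ∏ l ∈ (range (2 * m - 1)).filter (fun l => Even l),
      (((r : ℝ) - l) ^ 2 * ((r : ℝ) - l - 1) ^ 2) /
        ((((2 * m : ℕ) : ℝ) - l) *
          (((2 * m : ℕ) : ℝ) + 2 * ((n + r + 1 : ℕ) : ℝ) - 2 * r - l - 2) *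
          ((r : ℝ) - (2 * m : ℕ) + l + 1) * ((r : ℝ) - (2 * m : ℕ) + l + 2)) =
      (r.descFactorial (2 * m) : ℝ) / (4 ^ m * m ! * (n + 1).ascFactorial m) := by
  set u : ℕ → ℝ := fun j => ((r : ℝ) - 2 * j) * ((r : ℝ) - 2 * j - 1) with hu
  set d : ℕ → ℝ := fun j => (2 * (j : ℝ) + 2) * (2 * n + 2 * j + 2) with hd
  have hfactor : ∀ j ∈ range m,
      (((r : ℝ) - (2 * j : ℕ)) ^ 2 * ((r : ℝ) - (2 * j : ℕ) - 1) ^ 2) /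
        ((((2 * m : ℕ) : ℝ) - (2 * j : ℕ)) *
          (((2 * m : ℕ) : ℝ) + 2 * ((n + r + 1 : ℕ) : ℝ) - 2 * r - (2 * j : ℕ) - 2) *
          ((r : ℝ) - (2 * m : ℕ) + (2 * j : ℕ) + 1) *
          ((r : ℝ) - (2 * m : ℕ) + (2 * j : ℕ) + 2)) =
      u j ^ 2 / (d (m - 1 - j) * u (m - 1 - j)) := by
    intro j hj
    rw [mem_range] at hj
    simp only [hu, hd, Nat.cast_sub (by omega : j ≤ m - 1), Nat.cast_sub (by omega : 1 ≤ m)]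
    push_cast
    ring
  have hu0 : (r.descFactorial (2 * m) : ℝ) ≠ 0 := by
    exact_mod_cast (descFactorial_pos.2 (by omega)).ne'
  rw [filter_even_range, show (2 * m - 1 + 1) / 2 = m by omega,
    prod_image (fun _ _ _ _ h => by simpa using h), prod_congr rfl hfactor, prod_div_distrib,
    prod_mul_distrib, prod_range_reflect d, prod_range_reflect u, prod_pow,
    prod_range_sub_two_mul_eq_descFactorial, prod_range_two_mul_add_two_eq_ascFactorial]
  field_simp

theorem descFactorial_div_eq_choose (n r m : ℕ) (hm : 2 * m ≤ r) :
    (r.descFactorial (2 * m) : ℝ) / (4 ^ m * m ! * (n + 1).ascFactorial m) =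
      (n + r).choose (r - m) * (r - m).choose m * 2 ^ (r - 2 * m) /
        (2 ^ r * (n + r).choose r) := by
  have hD := factorial_mul_descFactorial hm
  have hA := factorial_mul_ascFactorial n m
  rw [cast_choose ℝ (by omega : r - m ≤ n + r), cast_choose ℝ (by omega : m ≤ r - m),
    cast_choose ℝ (by omega : r ≤ n + r), show n + r - (r - m) = n + m by omega,
    show r - m - m = r - 2 * m by omega, Nat.add_sub_cancel,
    show (4 : ℝ) ^ m = 2 ^ (2 * m) by rw [pow_mul]; norm_num,
    ← pow_sub_mul_pow 2 hm]
  rw [← hA, ← hD]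
  push_cast
  field_simp

theorem sum_choose_mul_choose_mul_two_pow (N r : ℕ) (h : r ≤ N) :
    ∑ m ∈ range (r / 2 + 1), N.choose (r - m) * (r - m).choose m * 2 ^ (r - 2 * m) =
      (2 * N).choose r := by
  have hpoly : (X + 1 : ℕ[X]) ^ (2 * N) =
      ∑ k ∈ range (N + 1), C (N.choose k) * (X ^ k * (X + C 2) ^ k) := by
    rw [pow_mul, show (X + 1 : ℕ[X]) ^ 2 = X * (X + C 2) + 1 by rw [C_ofNat]; ring, add_pow]
    simp [mul_pow, mul_comm]
  have hcoeff := congrArg (coeff · r) hpoly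
  simp only [coeff_X_add_one_pow, finsetSum_coeff, coeff_C_mul, coeff_X_pow_mul',
    coeff_X_add_C_pow, Nat.cast_id] at hcoeff
  rw [hcoeff, sum_subset (range_subset_range.2 (by omega : r / 2 + 1 ≤ r + 1)),
    ← sum_range_reflect, ← sum_subset (range_subset_range.2 (by omega : r + 1 ≤ N + 1))]
  · refine sum_congr rfl fun k hk => ?_
    rw [mem_range] at hk
    rw [if_pos (by omega), show r + 1 - 1 - k = r - k by omega, show r - (r - k) = k by omega,
      show r - 2 * (r - k) = k - (r - k) by omega]
    ring
  · intro k _ hk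
    rw [mem_range] at hk
    rw [if_neg (by omega), mul_zero]
  · intro m _ hm
    rw [mem_range] at hm
    rw [choose_eq_zero_of_lt (by omega : r - m < m), mul_zero, zero_mul]

/-- Squared-norm identity for the holomorphic vector `v_r^{hol}` (unbalanced case):
for integers `r ≥ 0`, `κ ≥ r + 2`,
`1 + ∑_{2 ≤ i ≤ r, i even} ∏_{0 ≤ l ≤ i-2, l even}
    (r-l)²(r-l-1)² / ((i-l)(i+2κ-2r-l-2)(r-i+l+1)(r-i+l+2))
  = 2^{-r} · C(2κ-2, r) / C(κ-1, r)`. -/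
theorem norm_vrhol_unbalanced (r κ : ℕ) (hκ : r + 2 ≤ κ) :
    1 + ∑ i ∈ (Finset.range (r + 1)).filter (fun i => 2 ≤ i ∧ Even i),
        ∏ l ∈ (Finset.range (i - 1)).filter (fun l => Even l),
          (((r : ℝ) - l) ^ 2 * ((r : ℝ) - l - 1) ^ 2) /
            (((i : ℝ) - l) * ((i : ℝ) + 2 * κ - 2 * r - l - 2) *
              ((r : ℝ) - i + l + 1) * ((r : ℝ) - i + l + 2)) =
      (2 : ℝ) ^ (-(r : ℤ)) * ((2 * κ - 2).choose r : ℝ) / ((κ - 1).choose r : ℝ) := by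
  obtain ⟨n, rfl⟩ : ∃ n, κ = n + r + 1 := ⟨κ - r - 1, by omega⟩
  rw [one_add_sum_filter_two_le_even _ _ (by simp)]
  rw [sum_congr rfl fun m hm => by
    have h2m : 2 * m ≤ r := by rw [mem_range] at hm; omega
    rw [prod_filter_even_eq_descFactorial_div n r m h2m, descFactorial_div_eq_choose n r m h2m]]
  have htrinomial := sum_choose_mul_choose_mul_two_pow (n + r) r (by omega)
  rw [← sum_div, show 2 * (n + r + 1) - 2 = 2 * (n + r) by omega, Nat.add_sub_cancel,
    ← htrinomial, zpow_neg, zpow_natCast]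
  push_cast
  ring
end

section
/- For every nonnegative integer r, the integral over the real line ∫_{−∞}^{∞} H_r(y)² e^{−2y²} dy equals ((2r)! / (2^r · r!)) · √(π/2), where H_r is the r-th physicists' Hermite polynomial. -/
/-- The `r`-th physicists' Hermite polynomial, via the Rodrigues formula
`H_r(x) = (-1)^r e^{x²} (d/dx)^r e^{-x²}`. -/
noncomputable def physHermite (r : ℕ) (x : ℝ) : ℝ :=
  (-1 : ℝ) ^ r * Real.exp (x ^ 2) * iteratedDeriv r (fun y => Real.exp (-(y ^ 2))) x

/-!
The Rodrigues formula makes `H_r` a polynomial with `H_{r+1} = 2x H_r - H_r'`, and then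
`H_{r+1}' = 2(r+1) H_r`. For `p = H_r`, `q = H_{r+1}` these give
`((x p² - p q) e^{-2x²})' = (q² - (2r+1) p²) e^{-2x²}`; since polynomial times Gaussian vanishes at
`±∞`, the integrals `I_r = ∫ H_r² e^{-2x²}` satisfy `I_{r+1} = (2r+1) I_r`. The Gaussian integral
gives `I_0 = √(π/2)`, and `(2r)! / (2^r r!)` obeys the same recursion.
-/

open Polynomial MeasureTheory Real Filter Topology

theorem hasDerivAt_exp_neg_mul_sq (b x : ℝ) :
    HasDerivAt (fun x => exp (-b * x ^ 2)) (-(2 * b * x) * exp (-b * x ^ 2)) x := by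
  refine ((hasDerivAt_pow 2 x).const_mul (-b)).exp.congr_deriv ?_
  simp only [Nat.cast_ofNat, Nat.add_one_sub_one, pow_one]
  ring

section GaussianWeight

variable {b : ℝ}

theorem integrable_eval_mul_exp_neg_mul_sq (hb : 0 < b) (P : ℝ[X]) :
    Integrable fun x : ℝ => P.eval x * exp (-b * x ^ 2) := by
  simp_rw [eval_eq_sum_range, Finset.sum_mul, mul_assoc]
  refine integrable_finsetSum _ fun i _ => Integrable.const_mul ?_ _
  simpa [rpow_natCast] using integrable_rpow_mul_exp_neg_mul_sq hb (s := i)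
    (neg_one_lt_zero.trans_le i.cast_nonneg)

theorem tendsto_eval_mul_exp_neg_mul_sq_cocompact (hb : 0 < b) (P : ℝ[X]) :
    Tendsto (fun x : ℝ => P.eval x * exp (-b * x ^ 2)) (cocompact ℝ) (𝓝 0) := by
  simp_rw [eval_eq_sum_range, Finset.sum_mul, mul_assoc]
  rw [← Finset.sum_const_zero (s := Finset.range (P.natDegree + 1))]
  refine tendsto_finsetSum _ fun i _ => ?_
  rw [← mul_zero (P.coeff i)]
  refine Tendsto.const_mul _ (tendsto_zero_iff_norm_tendsto_zero.2 ?_)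
  simpa [abs_mul, abs_pow, rpow_natCast, abs_of_pos (exp_pos _)] using
    tendsto_rpow_abs_mul_exp_neg_mul_sq_cocompact hb i

theorem integral_eval_derivative_sub_mul_exp_neg_mul_sq (hb : 0 < b) (P : ℝ[X]) :
    ∫ x : ℝ, (derivative P - C (2 * b) * X * P).eval x * exp (-b * x ^ 2) = 0 := by
  have hderiv (x : ℝ) : HasDerivAt (fun x => P.eval x * exp (-b * x ^ 2))
      ((derivative P - C (2 * b) * X * P).eval x * exp (-b * x ^ 2)) x := by
    refine ((P.hasDerivAt x).mul (hasDerivAt_exp_neg_mul_sq b x)).congr_deriv ?_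
    simp only [eval_sub, eval_mul, eval_C, eval_X]
    ring
  have hlim := tendsto_eval_mul_exp_neg_mul_sq_cocompact hb P
  rw [integral_of_hasDerivAt_of_tendsto hderiv (integrable_eval_mul_exp_neg_mul_sq hb _)
    (hlim.mono_left atBot_le_cocompact) (hlim.mono_left atTop_le_cocompact), sub_self]

end GaussianWeight

noncomputable def physHermitePoly : ℕ → ℝ[X]
  | 0 => 1
  | r + 1 => 2 * X * physHermitePoly r - derivative (physHermitePoly r)

@[simp]
theorem physHermitePoly_zero : physHermitePoly 0 = 1 := rfl

theorem physHermitePoly_succ (r : ℕ) :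
    physHermitePoly (r + 1) = 2 * X * physHermitePoly r - derivative (physHermitePoly r) := rfl

theorem derivative_physHermitePoly_succ (r : ℕ) :
    derivative (physHermitePoly (r + 1)) = C (2 * (r + 1) : ℝ) * physHermitePoly r := by
  induction r with
  | zero => simp [physHermitePoly_succ, ← C_ofNat]
  | succ r ih =>
    rw [physHermitePoly_succ (r + 1), derivative_sub, derivative_mul, ih, derivative_C_mul,
      physHermitePoly_succ r]
    simp only [derivative_mul, derivative_X, derivative_ofNat, map_mul, map_add, map_natCast,
      map_ofNat, map_one, Nat.cast_add, Nat.cast_one]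
    ring

theorem iteratedDeriv_exp_neg_sq (r : ℕ) :
    iteratedDeriv r (fun y => exp (-(y ^ 2))) =
      fun x => (-1) ^ r * (physHermitePoly r).eval x * exp (-(x ^ 2)) := by
  induction r with
  | zero => simp
  | succ r ih =>
    ext x
    rw [iteratedDeriv_succ, ih]
    simp only [mul_assoc]
    refine HasDerivAt.deriv ?_
    have hexp : HasDerivAt (fun x => exp (-(x ^ 2))) (-(2 * x) * exp (-(x ^ 2))) x := by
      simpa using hasDerivAt_exp_neg_mul_sq 1 x
    refine ((((physHermitePoly r).hasDerivAt x).mul hexp).const_mul _).congr_deriv ?_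
    simp only [physHermitePoly_succ, eval_sub, eval_mul, eval_X, eval_ofNat, pow_succ]
    ring

theorem physHermite_eq_eval (r : ℕ) (x : ℝ) : physHermite r x = (physHermitePoly r).eval x := by
  have hsign : ((-1 : ℝ) ^ r) ^ 2 = 1 := by rw [← pow_mul, pow_mul', neg_one_sq, one_pow]
  have hexp : exp (x ^ 2) * exp (-(x ^ 2)) = 1 := by rw [← exp_add, add_neg_cancel, exp_zero]
  rw [physHermite, iteratedDeriv_exp_neg_sq]
  linear_combination (physHermitePoly r).eval x * (((-1) ^ r) ^ 2 * hexp + hsign)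

noncomputable def physHermiteSqIntegral (r : ℕ) : ℝ :=
  ∫ x : ℝ, (physHermitePoly r).eval x ^ 2 * exp (-2 * x ^ 2)

theorem physHermiteSqIntegral_succ (r : ℕ) :
    physHermiteSqIntegral (r + 1) = (2 * r + 1) * physHermiteSqIntegral r := by
  unfold physHermiteSqIntegral
  set p := physHermitePoly r
  set q := physHermitePoly (r + 1)
  have key : derivative (X * p ^ 2 - p * q) - C (2 * 2) * X * (X * p ^ 2 - p * q) =
      q ^ 2 - C (2 * r + 1 : ℝ) * p ^ 2 := by
    have hp : derivative p = 2 * X * p - q := by linear_combination physHermitePoly_succ r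
    have hq : derivative q = C (2 * (r + 1) : ℝ) * p := derivative_physHermitePoly_succ r
    simp only [derivative_sub, derivative_mul, derivative_X, derivative_sq, hp, hq]
    simp only [map_mul, map_add, map_natCast, map_ofNat, map_one]
    ring
  have h := integral_eval_derivative_sub_mul_exp_neg_mul_sq two_pos (X * p ^ 2 - p * q)
  have hq := integrable_eval_mul_exp_neg_mul_sq two_pos (q ^ 2)
  have hp := (integrable_eval_mul_exp_neg_mul_sq two_pos (p ^ 2)).const_mul (2 * r + 1)
  rw [key] at h
  simp only [eval_sub, eval_mul, eval_C, eval_pow, sub_mul, mul_assoc] at h hq hp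
  rwa [integral_sub hq hp, integral_const_mul, sub_eq_zero] at h

theorem physHermiteSqIntegral_zero : physHermiteSqIntegral 0 = √(π / 2) := by
  simpa [physHermiteSqIntegral] using integral_gaussian 2

theorem factorial_two_mul_succ_div (r : ℕ) :
    ((2 * (r + 1)).factorial : ℝ) / (2 ^ (r + 1) * (r + 1).factorial) =
      (2 * r + 1) * ((2 * r).factorial / (2 ^ r * r.factorial)) := by
  rw [show 2 * (r + 1) = 2 * r + 1 + 1 by ring, Nat.factorial_succ, Nat.factorial_succ,
    Nat.factorial_succ]
  push_cast
  field_simp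
  ring

/-- `∫_{-∞}^{∞} H_r(y)² e^{-2y²} dy = ((2r)! / (2^r r!)) √(π/2)`. -/
theorem integral_physHermite_sq (r : ℕ) :
    ∫ y : ℝ, (physHermite r y) ^ 2 * Real.exp (-(2 * y ^ 2)) =
      ((Nat.factorial (2 * r) : ℝ) / (2 ^ r * Nat.factorial r)) * Real.sqrt (Real.pi / 2) := by
  simp_rw [physHermite_eq_eval, ← neg_mul]
  change physHermiteSqIntegral r = _
  induction r with
  | zero => simp [physHermiteSqIntegral_zero]
  | succ r ih => rw [physHermiteSqIntegral_succ, ih, factorial_two_mul_succ_div, mul_assoc]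
end

section
/- Let κ' ≥ 1 and r ≥ 0 be integers, and let N : ℕ × ℕ → ℝ be a function satisfying: N(i, j+1) = 2π(j+1)·N(i, j) for all even i with 0 ≤ i ≤ r and all j ≥ 0; (i + 2κ')·N(i, j) = i·N(i−2, j) for all even i with 2 ≤ i ≤ r and all j ≥ 0; and N(0, r) = 1. Then for every even integer i with 2 ≤ i ≤ r, N(i, r−i) = (2π)^{−i} · ∏_{0 ≤ l ≤ i−2, l even} (i−l) / ((i + 2κ' − l)(r − i + l + 1)(r − i + l + 2)). -/
/-!
Iterating the first recursion along `j` gives `N (0, r) = (2π)^i · (r-i+1) ⋯ r · N (0, r-i)`,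
which pins down `N (0, r-i)`; iterating the second along even `i` gives
`N (i, r-i) = ∏_{k < i/2} (2k+2)/(2k+2+2κ') · N (0, r-i)`. The stated product is this expression
with the first factor reflected (`k ↦ i/2 - 1 - k`) and the rising factorial grouped into
consecutive pairs.
-/

open Finset

section Products

variable {M : Type*} [CommMonoid M]

theorem eq_prod_range_mul_of_succ_eq {a g : ℕ → M} {n : ℕ}
    (h : ∀ k < n, a (k + 1) = g k * a k) : a n = (∏ k ∈ range n, g k) * a 0 := by
  induction n with
  | zero => simp
  | succ n ih =>
    rw [h n n.lt_succ_self, ih fun k hk => h k (hk.trans n.lt_succ_self), prod_range_succ,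
      mul_comm _ (g n), mul_assoc]

theorem prod_range_two_mul (f : ℕ → M) (n : ℕ) :
    ∏ t ∈ range (2 * n), f t = ∏ m ∈ range n, f (2 * m) * f (2 * m + 1) := by
  induction n with
  | zero => simp
  | succ n ih => rw [mul_add_one, prod_range_succ, prod_range_succ, ih, prod_range_succ, mul_assoc]

theorem prod_filter_even_range_two_mul_sub_one (f : ℕ → M) (n : ℕ) :
    ∏ l ∈ (range (2 * n - 1)).filter Even, f l = ∏ m ∈ range n, f (2 * m) := by
  have : (range (2 * n - 1)).filter Even = (range n).image (2 * ·) := by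
    ext l
    simp only [mem_filter, mem_range, mem_image, Nat.even_iff]
    constructor
    · rintro ⟨hl, hl_even⟩
      exact ⟨l / 2, by omega, by omega⟩
    · rintro ⟨m, hm, rfl⟩
      omega
  rw [this, prod_image fun _ _ _ _ h => by simpa using h]

end Products

theorem prod_range_sub_div_eq_prod_div_mul_inv {K : Type*} [Field K] (c : K) (j n : ℕ) :
    ∏ m ∈ range n,
        (2 * (n : K) - 2 * m) / ((2 * n + c - 2 * m) * (j + 2 * m + 1) * (j + 2 * m + 2))
      = (∏ k ∈ range n, (2 * (k : K) + 2) / (2 * k + 2 + c)) *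
        (∏ t ∈ range (2 * n), ((j : K) + t + 1))⁻¹ := by
  have hsplit : ∀ m : ℕ,
      (2 * (n : K) - 2 * m) / ((2 * n + c - 2 * m) * (j + 2 * m + 1) * (j + 2 * m + 2))
        = (2 * (n : K) - 2 * m) / (2 * n + c - 2 * m) *
          (((j : K) + 2 * m + 1) * (j + 2 * m + 2))⁻¹ :=
    fun m => by rw [mul_assoc, ← div_div, div_eq_mul_inv]
  have hreflect : ∏ m ∈ range n, (2 * (n : K) - 2 * m) / (2 * n + c - 2 * m)
      = ∏ k ∈ range n, (2 * (k : K) + 2) / (2 * k + 2 + c) := by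
    rw [← prod_range_reflect]
    refine prod_congr rfl fun m hm => ?_
    rw [Nat.sub_sub, Nat.cast_sub (by simp at hm; omega)]
    push_cast
    ring
  rw [prod_congr rfl fun m _ => hsplit m, prod_mul_distrib, prod_inv_distrib, hreflect,
    prod_range_two_mul]
  congr 2
  refine prod_congr rfl fun m _ => ?_
  push_cast
  ring

theorem tensor_norm_formula_general (κ' r : ℕ) (N : ℕ × ℕ → ℝ)
    (h1 : ∀ i j : ℕ, Even i → i ≤ r →
      N (i, j + 1) = 2 * Real.pi * ((j : ℝ) + 1) * N (i, j))
    (h2 : ∀ i j : ℕ, Even i → 2 ≤ i → i ≤ r →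
      ((i : ℝ) + 2 * κ') * N (i, j) = (i : ℝ) * N (i - 2, j))
    (h3 : N (0, r) = 1) :
    ∀ i : ℕ, Even i → 2 ≤ i → i ≤ r →
      N (i, r - i) = (2 * Real.pi) ^ (-(i : ℤ)) *
        ∏ l ∈ (Finset.range (i - 1)).filter (fun l => Even l),
          ((i : ℝ) - l) /
            (((i : ℝ) + 2 * κ' - l) * ((r : ℝ) - i + l + 1) * ((r : ℝ) - i + l + 2)) := by
  rintro i hi - hir
  obtain ⟨n, rfl⟩ := hi.two_dvd
  obtain ⟨j, rfl⟩ := Nat.exists_eq_add_of_le hir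
  have hshift : N (0, j + 2 * n) =
      (∏ t ∈ range (2 * n), 2 * Real.pi * ((j : ℝ) + t + 1)) * N (0, j) :=
    eq_prod_range_mul_of_succ_eq (a := fun t => N (0, j + t)) fun t _ => by
      rw [← add_assoc]
      exact_mod_cast h1 0 (j + t) Even.zero (by omega)
  have hlower : N (2 * n, j) =
      (∏ k ∈ range n, (2 * (k : ℝ) + 2) / (2 * k + 2 + 2 * κ')) * N (0, j) :=
    eq_prod_range_mul_of_succ_eq (a := fun k => N (2 * k, j)) fun k hk => by
      have := h2 (2 * k + 2) j (by simp [parity_simps]) (by omega) (by omega)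
      push_cast at this
      rw [div_mul_eq_mul_div, eq_div_iff (by positivity), mul_comm]
      simpa [mul_add_one] using this
  have hbottom : N (0, j) = (∏ t ∈ range (2 * n), 2 * Real.pi * ((j : ℝ) + t + 1))⁻¹ :=
    eq_inv_of_mul_eq_one_right (by rw [← hshift, add_comm, h3])
  rw [Nat.add_sub_cancel_left, hlower, hbottom, prod_filter_even_range_two_mul_sub_one,
    zpow_neg, zpow_natCast]
  push_cast
  simp only [add_sub_cancel_left]
  rw [prod_range_sub_div_eq_prod_div_mul_inv, prod_mul_distrib, prod_const, card_range, mul_inv]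
  ring

/-- Explicit norm formula for the orthogonal basis of the tensor product model:
if `N : ℕ × ℕ → ℝ` satisfies `N(i, j+1) = 2π(j+1) N(i, j)` (for even `0 ≤ i ≤ r`),
`(i + 2κ') N(i, j) = i · N(i-2, j)` (for even `2 ≤ i ≤ r`), and `N(0, r) = 1`, then for
every even `i` with `2 ≤ i ≤ r`,
`N(i, r-i) = (2π)^{-i} ∏_{0 ≤ l ≤ i-2, l even} (i-l)/((i+2κ'-l)(r-i+l+1)(r-i+l+2))`. -/
theorem tensor_norm_formula (κ' r : ℕ) (hκ' : 1 ≤ κ') (N : ℕ × ℕ → ℝ)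
    (h1 : ∀ i j : ℕ, Even i → i ≤ r →
      N (i, j + 1) = 2 * Real.pi * ((j : ℝ) + 1) * N (i, j))
    (h2 : ∀ i j : ℕ, Even i → 2 ≤ i → i ≤ r →
      ((i : ℝ) + 2 * κ') * N (i, j) = (i : ℝ) * N (i - 2, j))
    (h3 : N (0, r) = 1) :
    ∀ i : ℕ, Even i → 2 ≤ i → i ≤ r →
      N (i, r - i) = (2 * Real.pi) ^ (-(i : ℤ)) *
        ∏ l ∈ (Finset.range (i - 1)).filter (fun l => Even l),
          ((i : ℝ) - l) /
            (((i : ℝ) + 2 * κ' - l) * ((r : ℝ) - i + l + 1) * ((r : ℝ) - i + l + 2)) :=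
  tensor_norm_formula_general κ' r N h1 h2 h3
end
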